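/- Let f : ℝ → ℂ be a differentiable function. Then the following are equivalent: (b) there exists c ∈ ℂ such that the function x ↦ (x + i)²·(f(x) − c) is operator Lipschitz; (c) there exists c ∈ ℂ such that for every operator Lipschitz function h : ℝ → ℂ, the function x ↦ (x + i)·(f(x) − c)·h(x) is operator Lipschitz (i.e., (x + i)(f − c) is a multiplier of the operator Lipschitz functions). -/

import Mathlib

/-!
Write `g = (x + i)² φ`, `p = (x + i) φ = g / (x + i)` and `q = h / (x + i)`. Operator Lipschitz
functions are Lipschitz, so they grow at most linearly and `p`, `q` are bounded. For self-adjoint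
`A`, `B` the product `p h` then splits as
`p(A) h(A) - p(B) h(B) = p(A) (h(A) - h(B)) + (g(A) - g(B) - p(A) (A - B)) q(B)`,
using `p(A) (A + i) = g(A)` and `h(B) = (B + i) q(B)`, and every term is `O(‖A - B‖)`.
The converse takes `h = x + i`.
-/

open Complex
open scoped NNReal

universe u

/-- Functional calculus `g(A)` for `g : ℝ → ℂ` and a (self-adjoint, hence normal)
bounded operator `A`, obtained by applying `z ↦ g (Re z)` to `A` via the continuous
functional calculus. -/
noncomputable def opFC {H : Type u} [NormedAddCommGroup H] [InnerProductSpace ℂ H]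
    [CompleteSpace H] (g : ℝ → ℂ) (A : H →L[ℂ] H) : H →L[ℂ] H :=
  cfc (fun z : ℂ => g z.re) A

/-- A function `g : ℝ → ℂ` is operator Lipschitz if there is `C ≥ 0` such that
`‖g(A) − g(B)‖ ≤ C ‖A − B‖` for all bounded self-adjoint operators `A, B` on every
complex Hilbert space. -/
def OperatorLipschitz (g : ℝ → ℂ) : Prop :=
  ∃ C : ℝ, 0 ≤ C ∧ ∀ (H : Type u) (_ : NormedAddCommGroup H) (_ : InnerProductSpace ℂ H)
    (_ : CompleteSpace H) (A B : H →L[ℂ] H), IsSelfAdjoint A → IsSelfAdjoint B →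
    ‖opFC g A - opFC g B‖ ≤ C * ‖A - B‖

theorem norm_mul_sub_mul_le_of_mul_eq {R : Type*} [NormedRing R]
    {pa pb ha hb ga gb xa xb qb : R} (hga : pa * xa = ga) (hgb : pb * xb = gb)
    (hhb : hb = xb * qb) :
    ‖pa * ha - pb * hb‖ ≤ ‖pa‖ * ‖ha - hb‖ + (‖ga - gb‖ + ‖pa‖ * ‖xa - xb‖) * ‖qb‖ := by
  have key : pa * ha - pb * hb = pa * (ha - hb) + (ga - gb - pa * (xa - xb)) * qb := by
    subst hga hgb hhb
    noncomm_ring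
  rw [key]
  calc _ ≤ ‖pa * (ha - hb)‖ + ‖(ga - gb - pa * (xa - xb)) * qb‖ := norm_add_le _ _
    _ ≤ ‖pa‖ * ‖ha - hb‖ + ‖ga - gb - pa * (xa - xb)‖ * ‖qb‖ :=
        add_le_add (norm_mul_le _ _) (norm_mul_le _ _)
    _ ≤ _ := by
        gcongr
        exact (norm_sub_le _ _).trans (by gcongr; exact norm_mul_le _ _)

theorem ofReal_add_I_ne_zero (x : ℝ) : (x : ℂ) + I ≠ 0 := by
  intro hx
  simpa using congrArg Complex.im hx

theorem norm_div_ofReal_add_I_le {g : ℝ → ℂ} {K : ℝ≥0} (hg : LipschitzWith K g) (x : ℝ) :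
    ‖g x / ((x : ℂ) + I)‖ ≤ ‖g 0‖ + K := by
  have h_one : 1 ≤ ‖(x : ℂ) + I‖ := by simpa using Complex.abs_im_le_norm ((x : ℂ) + I)
  have h_abs : |x| ≤ ‖(x : ℂ) + I‖ := by simpa using Complex.abs_re_le_norm ((x : ℂ) + I)
  have h_growth : ‖g x‖ ≤ ‖g 0‖ + K * |x| := by
    simpa using (norm_le_norm_add_norm_sub' (g x) (g 0)).trans
      (add_le_add_right (hg.norm_sub_le x 0) _)
  rw [norm_div, div_le_iff₀ (by linarith)]
  nlinarith [norm_nonneg (g 0), K.coe_nonneg]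

section opFC

variable {H : Type u} [NormedAddCommGroup H] [InnerProductSpace ℂ H] [CompleteSpace H]

theorem opFC_algebraMap (g : ℝ → ℂ) (x : ℝ) :
    opFC g (algebraMap ℂ (H →L[ℂ] H) x) = algebraMap ℂ (H →L[ℂ] H) (g x) := by
  rw [opFC, cfc_algebraMap, ofReal_re]

theorem opFC_mul {φ ψ : ℝ → ℂ} (hφ : Continuous φ) (hψ : Continuous ψ) (A : H →L[ℂ] H) :
    opFC (fun x => φ x * ψ x) A = opFC φ A * opFC ψ A :=
  cfc_mul _ _ A (hφ.comp continuous_re).continuousOn (hψ.comp continuous_re).continuousOn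

theorem opFC_ofReal_add_I {A : H →L[ℂ] H} (hA : IsSelfAdjoint A) :
    opFC (fun x : ℝ => (x : ℂ) + I) A = A + algebraMap ℂ (H →L[ℂ] H) I := by
  have h_re : (spectrum ℂ A).EqOn (fun z : ℂ => (z.re : ℂ) + I) (fun z => z + I) :=
    fun z hz => by simp only [← hA.mem_spectrum_eq_re hz]
  rw [opFC, cfc_congr h_re, cfc_add_const I (fun z : ℂ => z) A, cfc_id' ℂ A]

theorem norm_opFC_le {φ : ℝ → ℂ} {M : ℝ} (hM : 0 ≤ M) (hφ : ∀ x, ‖φ x‖ ≤ M) (A : H →L[ℂ] H) :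
    ‖opFC φ A‖ ≤ M :=
  norm_cfc_le hM fun z _ => hφ z.re

/-- On a nontrivial space, the scalar operators `x • 1` already force `g` to be Lipschitz. -/
theorem lipschitzWith_of_norm_opFC_sub_le [Nontrivial H] {g : ℝ → ℂ} {C : ℝ} (hC0 : 0 ≤ C)
    (hC : ∀ A B : H →L[ℂ] H, IsSelfAdjoint A → IsSelfAdjoint B →
      ‖opFC g A - opFC g B‖ ≤ C * ‖A - B‖) :
    LipschitzWith ⟨C, hC0⟩ g := by
  refine LipschitzWith.of_dist_le_mul fun x y => ?_
  have hsa (t : ℝ) : IsSelfAdjoint (algebraMap ℂ (H →L[ℂ] H) t) :=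
    .algebraMap _ (conj_ofReal t)
  have := hC _ _ (hsa x) (hsa y)
  rwa [opFC_algebraMap, opFC_algebraMap, ← map_sub, ← map_sub, norm_algebraMap',
    norm_algebraMap', ← ofReal_sub, norm_real, ← dist_eq_norm, ← dist_eq_norm] at this

theorem norm_opFC_div_mul_sub_le {g h : ℝ → ℂ} {K L : ℝ≥0} (hg : LipschitzWith K g)
    (hh : LipschitzWith L h) {A B : H →L[ℂ] H} (hA : IsSelfAdjoint A) (hB : IsSelfAdjoint B) :
    ‖opFC (fun x : ℝ => g x / ((x : ℂ) + I) * h x) A -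
        opFC (fun x : ℝ => g x / ((x : ℂ) + I) * h x) B‖ ≤
      (‖g 0‖ + K) * ‖opFC h A - opFC h B‖ +
        (‖opFC g A - opFC g B‖ + (‖g 0‖ + K) * ‖A - B‖) * (‖h 0‖ + L) := by
  set X : ℝ → ℂ := fun x => (x : ℂ) + I
  have hX : Continuous X := by fun_prop
  set p : ℝ → ℂ := fun x => g x / X x
  set q : ℝ → ℂ := fun x => h x / X x
  have hp : Continuous p := hg.continuous.div hX ofReal_add_I_ne_zero
  have hq : Continuous q := hh.continuous.div hX ofReal_add_I_ne_zero
  have hpX (x : ℝ) : p x * X x = g x := div_mul_cancel₀ _ (ofReal_add_I_ne_zero x)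
  have hXq (x : ℝ) : X x * q x = h x := mul_div_cancel₀ _ (ofReal_add_I_ne_zero x)
  have h_g (T : H →L[ℂ] H) : opFC p T * opFC X T = opFC g T := by
    rw [← opFC_mul hp hX]
    simp only [hpX]
  have h_h : opFC h B = opFC X B * opFC q B := by
    rw [← opFC_mul hX hq]
    simp only [hXq]
  have h_X : opFC X A - opFC X B = A - B := by
    rw [opFC_ofReal_add_I hA, opFC_ofReal_add_I hB, add_sub_add_right_eq_sub]
  have hpA : ‖opFC p A‖ ≤ ‖g 0‖ + K :=
    norm_opFC_le (by positivity) (norm_div_ofReal_add_I_le hg) A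
  have hqB : ‖opFC q B‖ ≤ ‖h 0‖ + L :=
    norm_opFC_le (by positivity) (norm_div_ofReal_add_I_le hh) B
  rw [opFC_mul hp hh.continuous, opFC_mul hp hh.continuous]
  calc _ ≤ ‖opFC p A‖ * ‖opFC h A - opFC h B‖ +
        (‖opFC g A - opFC g B‖ + ‖opFC p A‖ * ‖opFC X A - opFC X B‖) * ‖opFC q B‖ :=
        norm_mul_sub_mul_le_of_mul_eq (h_g A) (h_g B) h_h
    _ ≤ _ := by
        rw [h_X]
        gcongr

end opFC

theorem operatorLipschitz_ofReal_add_I : OperatorLipschitz.{u} (fun x : ℝ => (x : ℂ) + I) := by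
  refine ⟨1, zero_le_one, fun H _ _ _ A B hA hB => ?_⟩
  rw [opFC_ofReal_add_I hA, opFC_ofReal_add_I hB, add_sub_add_right_eq_sub, one_mul]

theorem OperatorLipschitz.ofReal_add_I_mul_mul {φ h : ℝ → ℂ}
    (hφ : OperatorLipschitz.{u} (fun x : ℝ => ((x : ℂ) + I) ^ 2 * φ x))
    (hh : OperatorLipschitz.{u} h) :
    OperatorLipschitz.{u} (fun x : ℝ => ((x : ℂ) + I) * φ x * h x) := by
  set g : ℝ → ℂ := fun x : ℝ => ((x : ℂ) + I) ^ 2 * φ x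
  obtain ⟨C, hC0, hC⟩ := hφ
  obtain ⟨D, hD0, hD⟩ := hh
  set M := ‖g 0‖ + C
  set N := ‖h 0‖ + D
  refine ⟨M * D + (C + M) * N, by positivity, fun H _ _ _ A B hA hB => ?_⟩
  rcases subsingleton_or_nontrivial H with _ | _
  · rw [norm_of_subsingleton]
    positivity
  have h_eq : (fun x : ℝ => ((x : ℂ) + I) * φ x * h x) =
      fun x : ℝ => g x / ((x : ℂ) + I) * h x := by
    funext x
    rw [div_mul_eq_mul_div, eq_div_iff (ofReal_add_I_ne_zero x)]
    ring
  rw [h_eq]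
  calc _ ≤ M * ‖opFC h A - opFC h B‖ + (‖opFC g A - opFC g B‖ + M * ‖A - B‖) * N :=
        norm_opFC_div_mul_sub_le (lipschitzWith_of_norm_opFC_sub_le hC0 (hC H _ _ _))
          (lipschitzWith_of_norm_opFC_sub_le hD0 (hD H _ _ _)) hA hB
    _ ≤ M * (D * ‖A - B‖) + (C * ‖A - B‖ + M * ‖A - B‖) * N := by
        gcongr
        exacts [hD H _ _ _ A B hA hB, hC H _ _ _ A B hA hB]
    _ = (M * D + (C + M) * N) * ‖A - B‖ := by ring

theorem stmt7_general (f : ℝ → ℂ) :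
    (∃ c : ℂ, OperatorLipschitz.{u} (fun x : ℝ => ((x : ℂ) + I) ^ 2 * (f x - c))) ↔
      (∃ c : ℂ, ∀ h : ℝ → ℂ, OperatorLipschitz.{u} h →
        OperatorLipschitz.{u} (fun x : ℝ => ((x : ℂ) + I) * (f x - c) * h x)) := by
  constructor
  · rintro ⟨c, hc⟩
    exact ⟨c, fun h hh => hc.ofReal_add_I_mul_mul hh⟩
  · rintro ⟨c, hc⟩
    refine ⟨c, ?_⟩
    convert hc _ operatorLipschitz_ofReal_add_I using 2 with x
    ring

/-- Theorem 4.2, equivalence (b) ⇔ (c): for a differentiable `f : ℝ → ℂ`, there exists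
`c ∈ ℂ` with `x ↦ (x + i)² (f x − c)` operator Lipschitz if and only if there exists
`c ∈ ℂ` such that `(x + i)(f − c)` is a multiplier of the operator Lipschitz functions,
i.e. `x ↦ (x + i)(f x − c) h x` is operator Lipschitz for every operator Lipschitz `h`. -/
theorem stmt7 (f : ℝ → ℂ) (hf : Differentiable ℝ f) :
    (∃ c : ℂ, OperatorLipschitz.{u} (fun x : ℝ => ((x : ℂ) + I) ^ 2 * (f x - c))) ↔
      (∃ c : ℂ, ∀ h : ℝ → ℂ, OperatorLipschitz.{u} h →
        OperatorLipschitz.{u} (fun x : ℝ => ((x : ℂ) + I) * (f x - c) * h x)) :=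
  stmt7_general f
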